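/- Suppose θ₀ < 0 is finite, c(0) > 0, K > 0, and u : [0,T*)×ℝ → ℝ is continuous with u(t,x) > θ₀ for all (t,x), supp u(t,·) ⊆ [−c(0)t − K, c(0)t + K], and F(t) := −∫_ℝ u(t,x)dx satisfies F(t) = F(0) + tF'(0) with F'(0) > −2θ₀c(0). Then for every t < T*, F(t) ≤ −2θ₀(c(0)t + K), hence F(0) + tF'(0) ≤ −2θ₀c(0)t − 2θ₀K, giving t ≤ (−2θ₀K − F(0))/(F'(0) + 2θ₀c(0)); in particular T* ≤ (−2θ₀K − F(0))/(F'(0) + 2θ₀c(0)) is finite. -/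

import Mathlib

open Set MeasureTheory

/-- Finite-time degeneracy: if `u > θ₀` with `θ₀ < 0`, `u(t,·)` is supported in
`[−c₀t−K, c₀t+K]`, and `F(t) = −∫u = F(0) + tF'(0)` with `F'(0) > −2θ₀c₀`, then
`T* ≤ (−2θ₀K − F(0))/(F'(0) + 2θ₀c₀)`; in particular `T*` is finite. -/
theorem finite_time_degeneracy
    (Tstar θ₀ c0 K F0 F'0 : ℝ)
    (hTstar : 0 < Tstar) (hθ₀ : θ₀ < 0) (hc0 : 0 < c0) (hK : 0 < K)
    (u : ℝ → ℝ → ℝ)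
    (hcont : Continuous (Function.uncurry u))
    (hlower : ∀ t ∈ Ico (0:ℝ) Tstar, ∀ x : ℝ, θ₀ < u t x)
    (hsupp : ∀ t ∈ Ico (0:ℝ) Tstar, ∀ x : ℝ, c0 * t + K < |x| → u t x = 0)
    (hint : ∀ t ∈ Ico (0:ℝ) Tstar, Integrable (u t))
    (F : ℝ → ℝ)
    (hF : ∀ t ∈ Ico (0:ℝ) Tstar, F t = - ∫ x : ℝ, u t x)
    (hFlin : ∀ t ∈ Ico (0:ℝ) Tstar, F t = F0 + t * F'0)
    (hF0 : F 0 = F0)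
    (hF'0 : -2 * θ₀ * c0 < F'0) :
    Tstar ≤ (-2 * θ₀ * K - F0) / (F'0 + 2 * θ₀ * c0) := by
  have hden : 0 < F'0 + 2 * θ₀ * c0 := by linarith
  -- Key pointwise-in-time bound
  have key : ∀ t ∈ Ico (0:ℝ) Tstar, F0 + t * F'0 ≤ -2 * θ₀ * (c0 * t + K) := by
    intro t ht
    set L : ℝ := c0 * t + K with hL
    have hL0 : 0 < L := by
      have := ht.1
      have : 0 ≤ c0 * t := mul_nonneg hc0.le this
      linarith
    set g : ℝ → ℝ := (Icc (-L) L).indicator (fun _ => θ₀) with hg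
    have hgle : ∀ x, g x ≤ u t x := by
      intro x
      by_cases hx : x ∈ Icc (-L) L
      · simp only [hg, indicator_of_mem hx]
        exact (hlower t ht x).le
      · simp only [hg, indicator_of_notMem hx]
        have habs : L < |x| := by
          simp only [mem_Icc, not_and_or, not_le] at hx
          rcases hx with h | h
          · rw [abs_of_neg (by linarith)]; linarith
          · rw [abs_of_pos (by linarith)]; linarith
        rw [hsupp t ht x habs]
    have hgint : Integrable g := (integrable_indicator_iff measurableSet_Icc).mpr
      ((integrableOn_const_iff).mpr (Or.inr (by simp [Real.volume_Icc])))
    have hmono : ∫ x, g x ≤ ∫ x, u t x :=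
      integral_mono hgint (hint t ht) hgle
    have hgval : ∫ x, g x = 2 * L * θ₀ := by
      rw [hg, integral_indicator_const _ measurableSet_Icc]
      rw [Real.volume_real_Icc_of_le (by linarith : -L ≤ L),
        smul_eq_mul]
      ring
    have hFt : F0 + t * F'0 = - ∫ x, u t x := by
      rw [← hFlin t ht, hF t ht]
    rw [hFt]
    have : 2 * L * θ₀ ≤ ∫ x, u t x := hgval ▸ hmono
    have := neg_le_neg this
    calc - ∫ x, u t x ≤ -(2 * L * θ₀) := this
      _ = -2 * θ₀ * L := by ring
  -- conclude
  by_contra hcon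
  push_neg at hcon
  set B : ℝ := (-2 * θ₀ * K - F0) / (F'0 + 2 * θ₀ * c0) with hB
  have hB0 : 0 ≤ B := by
    have h0 := key 0 ⟨le_refl 0, hTstar⟩
    have : F0 ≤ -2 * θ₀ * K := by linarith [h0]
    exact div_nonneg (by linarith) hden.le
  set s : ℝ := (B + Tstar) / 2 with hs
  have hsmem : s ∈ Ico (0:ℝ) Tstar := ⟨by positivity, by rw [hs]; linarith⟩
  have hkey := key s hsmem
  have hsle : s ≤ B := by
    rw [hB, le_div_iff₀ hden]
    nlinarith [hkey]
  have : B < s := by rw [hs]; linarith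
  linarith
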